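/- For g = 3 and distinct i, j, k ∈ {1,2,3}, the following elements lie in the subgroup Q₁ of Λ²(S²L) generated by {σ·x − x : σ ∈ SL(3,ℤ), x ∈ Λ²(S²L)}: (i) Xᵢ² ∧ X_{ij}; (ii) X_{ij} ∧ X_{jk} (from e_{ji} acting on Xᵢ² ∧ X_{jk}); (iii) Xᵢ² ∧ X_k² + Xᵢ² ∧ X_{jk}; (iv) 2·Xᵢ² ∧ Xⱼ² + X_{ij} ∧ Xⱼ²; (v) X_k² ∧ X_{ij} + Xᵢ² ∧ X_{kj}. -/

import Mathlib

open Matrix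

variable (R : Type) [CommRing R]

/-- The module of symmetric `g×g` matrices over `R` (the model for `S²L`, resp. `S²(L*)`). -/
def symMod (g : ℕ) : Submodule R (Matrix (Fin g) (Fin g) R) where
  carrier := {B | B.IsSymm}
  add_mem' := by
    intro a b ha hb
    show (a + b)ᵀ = a + b
    rw [Matrix.transpose_add, ha, hb]
  zero_mem' := by
    show (0 : Matrix (Fin g) (Fin g) R)ᵀ = 0
    simp
  smul_mem' := by
    intro c a ha
    show (c • a)ᵀ = c • a
    rw [Matrix.transpose_smul, ha]

variable {R}

/-- Conjugation `B ↦ A B ᵗA` as a linear endomorphism of the symmetric matrices. -/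
def conjLin {g : ℕ} (A : Matrix (Fin g) (Fin g) R) : symMod R g →ₗ[R] symMod R g where
  toFun B := ⟨A * (B : Matrix (Fin g) (Fin g) R) * Aᵀ, by
    have hB : (B : Matrix (Fin g) (Fin g) R)ᵀ = B := B.2
    show (A * (B : Matrix (Fin g) (Fin g) R) * Aᵀ)ᵀ = A * (B : Matrix (Fin g) (Fin g) R) * Aᵀ
    rw [Matrix.transpose_mul, Matrix.transpose_mul, Matrix.transpose_transpose, hB,
      Matrix.mul_assoc]⟩
  map_add' B C := by
    apply Subtype.ext
    show A * ((B : Matrix (Fin g) (Fin g) R) + C) * Aᵀ = _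
    simp [Matrix.mul_add, Matrix.add_mul]
  map_smul' c B := by
    apply Subtype.ext
    show A * (c • (B : Matrix (Fin g) (Fin g) R)) * Aᵀ = _
    simp [Matrix.mul_smul, Matrix.smul_mul]

lemma conjLin_mul {g : ℕ} (M N : Matrix (Fin g) (Fin g) R) :
    conjLin (M * N) = (conjLin M).comp (conjLin N) := by
  apply LinearMap.ext
  intro B
  apply Subtype.ext
  show (M * N) * (B : Matrix (Fin g) (Fin g) R) * (M * N)ᵀ
      = M * (N * (B : Matrix (Fin g) (Fin g) R) * Nᵀ) * Mᵀ
  rw [Matrix.transpose_mul]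
  simp [Matrix.mul_assoc]

lemma conjLin_one {g : ℕ} : conjLin (1 : Matrix (Fin g) (Fin g) R) = LinearMap.id := by
  apply LinearMap.ext
  intro B
  apply Subtype.ext
  show (1 : Matrix (Fin g) (Fin g) R) * B * (1 : Matrix (Fin g) (Fin g) R)ᵀ = B
  simp

lemma isSymm_std {g : ℕ} (i : Fin g) :
    (Matrix.single i i (1 : ℤ)).IsSymm := by
  show (Matrix.single i i (1 : ℤ))ᵀ = _
  ext a b
  simp [Matrix.single, Matrix.transpose_apply, and_comm]

lemma isSymm_mix {g : ℕ} (i j : Fin g) :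
    (Matrix.single i j (1 : ℤ) + Matrix.single j i (1 : ℤ)).IsSymm := by
  show _ᵀ = _
  ext a b
  simp [Matrix.single, Matrix.transpose_apply]
  rw [add_comm]
  congr 1 <;> simp [and_comm]

/-- `Xᵢ² = xᵢ⊗xᵢ` as an element of `S²L` (symmetric matrices). -/
def Xsq {g : ℕ} (i : Fin g) : symMod ℤ g :=
  ⟨Matrix.single i i 1, isSymm_std i⟩

/-- `X_{ij} = xᵢ⊗xⱼ + xⱼ⊗xᵢ` as an element of `S²L`. -/
def Xmix {g : ℕ} (i j : Fin g) : symMod ℤ g :=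
  ⟨Matrix.single i j 1 + Matrix.single j i 1, isSymm_mix i j⟩

/-- The wedge product `a ∧ b ∈ Λ²(S²L)`, inside the exterior algebra. -/
noncomputable def wedge {g : ℕ} (a b : symMod ℤ g) : ExteriorAlgebra ℤ (symMod ℤ g) :=
  ExteriorAlgebra.ι ℤ a * ExteriorAlgebra.ι ℤ b

/-- The subgroup `Q₁` of `Λ²(S²L)` generated by the elements `σ·x - x`. -/
def Qone (g : ℕ) : AddSubgroup (ExteriorAlgebra ℤ (symMod ℤ g)) :=
  AddSubgroup.closure
    {y : ExteriorAlgebra ℤ (symMod ℤ g) |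
      ∃ (σ : Matrix.SpecialLinearGroup (Fin g) ℤ) (z : ExteriorAlgebra ℤ (symMod ℤ g)),
        z ∈ ⋀[ℤ]^2 (symMod ℤ g) ∧
        y = ExteriorAlgebra.map (conjLin (σ : Matrix (Fin g) (Fin g) ℤ)) z - z}

/- ------------------- auxiliary lemmas ------------------- -/

set_option maxHeartbeats 1000000
set_option synthInstance.maxHeartbeats 1000000

section Aux

lemma transpose_std {g : ℕ} (a b : Fin g) :
    (Matrix.single a b (1 : ℤ))ᵀ = Matrix.single b a 1 := by
  ext p q
  simp [Matrix.single, Matrix.transpose_apply, and_comm]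

lemma Xmix_comm {g : ℕ} (a b : Fin g) : Xmix a b = Xmix b a := by
  apply Subtype.ext
  show Matrix.single a b 1 + Matrix.single b a 1 = _
  exact add_comm _ _

lemma wedge_mem {g : ℕ} (a b : symMod ℤ g) : wedge a b ∈ ⋀[ℤ]^2 (symMod ℤ g) := by
  have : (⋀[ℤ]^2 (symMod ℤ g) : Submodule ℤ _)
      = LinearMap.range (ExteriorAlgebra.ι ℤ : symMod ℤ g →ₗ[ℤ] _) *
        LinearMap.range (ExteriorAlgebra.ι ℤ : symMod ℤ g →ₗ[ℤ] _) :=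
    pow_two _
  rw [this]
  exact Submodule.mul_mem_mul (LinearMap.mem_range_self _ a) (LinearMap.mem_range_self _ b)

lemma gen_mem {g : ℕ} (σ : Matrix.SpecialLinearGroup (Fin g) ℤ) (a b : symMod ℤ g) :
    wedge (conjLin (σ : Matrix (Fin g) (Fin g) ℤ) a)
      (conjLin (σ : Matrix (Fin g) (Fin g) ℤ) b) - wedge a b ∈ Qone g := by
  apply AddSubgroup.subset_closure
  refine ⟨σ, wedge a b, wedge_mem a b, ?_⟩
  rw [wedge, wedge, _root_.map_mul, ExteriorAlgebra.map_apply_ι, ExteriorAlgebra.map_apply_ι]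

lemma wedge_add_left {g : ℕ} (a b c : symMod ℤ g) :
    wedge (a + b) c = wedge a c + wedge b c := by
  simp [wedge, map_add, add_mul]

lemma wedge_add_right {g : ℕ} (a b c : symMod ℤ g) :
    wedge a (b + c) = wedge a b + wedge a c := by
  simp [wedge, map_add, mul_add]

lemma wedge_self {g : ℕ} (a : symMod ℤ g) : wedge a a = 0 :=
  ExteriorAlgebra.ι_sq_zero a

lemma wedge_anti {g : ℕ} (a b : symMod ℤ g) : wedge a b = - wedge b a :=
  eq_neg_of_add_eq_zero_left (ExteriorAlgebra.ι_add_mul_swap a b)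

/-- The elementary transvection matrix as an element of `SL(3,ℤ)`. -/
def ET (a b : Fin 3) (h : a ≠ b) : Matrix.SpecialLinearGroup (Fin 3) ℤ :=
  ⟨Matrix.transvection a b 1, Matrix.det_transvection_of_ne a b h 1⟩

lemma conjLin_coe {g : ℕ} (A : Matrix (Fin g) (Fin g) ℤ) (B : symMod ℤ g) :
    ((conjLin A B : symMod ℤ g) : Matrix (Fin g) (Fin g) ℤ)
      = A * (B : Matrix (Fin g) (Fin g) ℤ) * Aᵀ := rfl

/- action of `e_{ab}` on the basis of `S²L` -/

lemma conjT_sq_same (a b : Fin 3) (h : a ≠ b) :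
    conjLin (Matrix.transvection a b (1:ℤ)) (Xsq b) = Xsq b + Xsq a + Xmix a b := by
  apply Subtype.ext
  rw [conjLin_coe]
  show Matrix.transvection a b 1 * Matrix.single b b 1 * (Matrix.transvection a b 1)ᵀ
      = ((Xsq b + Xsq a + Xmix a b : symMod ℤ 3) : Matrix (Fin 3) (Fin 3) ℤ)
  simp [Matrix.transvection, Matrix.transpose_add, transpose_std, Matrix.add_mul,
    Matrix.mul_add, Xsq, Xmix, h, h.symm]
  abel

lemma conjT_sq_ne (a b c : Fin 3) (hcb : c ≠ b) :
    conjLin (Matrix.transvection a b (1:ℤ)) (Xsq c) = Xsq c := by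
  apply Subtype.ext
  rw [conjLin_coe]
  show Matrix.transvection a b 1 * Matrix.single c c 1 * (Matrix.transvection a b 1)ᵀ
      = ((Xsq c : symMod ℤ 3) : Matrix (Fin 3) (Fin 3) ℤ)
  simp [Matrix.transvection, Matrix.transpose_add, transpose_std, Matrix.add_mul,
    Matrix.mul_add, Xsq, hcb, hcb.symm]

lemma conjT_mix_same (a b : Fin 3) (h : a ≠ b) :
    conjLin (Matrix.transvection a b (1:ℤ)) (Xmix a b) = Xmix a b + (Xsq a + Xsq a) := by
  apply Subtype.ext
  rw [conjLin_coe]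
  show Matrix.transvection a b 1 *
      (Matrix.single a b 1 + Matrix.single b a 1) *
      (Matrix.transvection a b 1)ᵀ
      = ((Xmix a b + (Xsq a + Xsq a) : symMod ℤ 3) : Matrix (Fin 3) (Fin 3) ℤ)
  simp [Matrix.transvection, Matrix.transpose_add, transpose_std, Matrix.add_mul,
    Matrix.mul_add, Xsq, Xmix, h, h.symm]
  abel

lemma conjT_mix_move (a b c : Fin 3) (hab : a ≠ b) (hac : a ≠ c) (hbc : b ≠ c) :
    conjLin (Matrix.transvection a b (1:ℤ)) (Xmix b c) = Xmix b c + Xmix a c := by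
  apply Subtype.ext
  rw [conjLin_coe]
  show Matrix.transvection a b 1 *
      (Matrix.single b c 1 + Matrix.single c b 1) *
      (Matrix.transvection a b 1)ᵀ
      = ((Xmix b c + Xmix a c : symMod ℤ 3) : Matrix (Fin 3) (Fin 3) ℤ)
  simp [Matrix.transvection, Matrix.transpose_add, transpose_std, Matrix.add_mul,
    Matrix.mul_add, Xmix, hab, hac, hbc, hab.symm, hac.symm, hbc.symm]
  abel

lemma conjT_mix_fix (a b c d : Fin 3) (hbc : b ≠ c) (hbd : b ≠ d) :
    conjLin (Matrix.transvection a b (1:ℤ)) (Xmix c d) = Xmix c d := by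
  apply Subtype.ext
  rw [conjLin_coe]
  show Matrix.transvection a b 1 *
      (Matrix.single c d 1 + Matrix.single d c 1) *
      (Matrix.transvection a b 1)ᵀ
      = ((Xmix c d : symMod ℤ 3) : Matrix (Fin 3) (Fin 3) ℤ)
  simp [Matrix.transvection, Matrix.transpose_add, transpose_std, Matrix.add_mul,
    Matrix.mul_add, Xmix, hbc, hbd, hbc.symm, hbd.symm]

/- the key membership lemmas -/

lemma memL1 (a b : Fin 3) (h : a ≠ b) : wedge (Xsq a) (Xmix a b) ∈ Qone 3 := by
  have hgen := gen_mem (ET a b h) (Xsq a) (Xsq b)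
  rw [show ((ET a b h : Matrix (Fin 3) (Fin 3) ℤ)) = Matrix.transvection a b 1 from rfl,
    conjT_sq_ne a b a h, conjT_sq_same a b h] at hgen
  have e : wedge (Xsq a) (Xsq b + Xsq a + Xmix a b) - wedge (Xsq a) (Xsq b)
      = wedge (Xsq a) (Xmix a b) := by
    rw [wedge_add_right, wedge_add_right, wedge_self]
    abel
  rwa [e] at hgen

lemma memL2 (a b : Fin 3) (h : a ≠ b) : wedge (Xmix a b) (Xsq b) ∈ Qone 3 := by
  have hgen := gen_mem (ET b a h.symm) (Xsq a) (Xsq b)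
  rw [show ((ET b a h.symm : Matrix (Fin 3) (Fin 3) ℤ)) = Matrix.transvection b a 1 from rfl,
    conjT_sq_ne b a b h.symm, conjT_sq_same b a h.symm] at hgen
  have e : wedge (Xsq a + Xsq b + Xmix b a) (Xsq b) - wedge (Xsq a) (Xsq b)
      = wedge (Xmix a b) (Xsq b) := by
    rw [wedge_add_left, wedge_add_left, wedge_self, Xmix_comm a b]
    abel
  rwa [e] at hgen

lemma memL3 (a b : Fin 3) (h : a ≠ b) :
    wedge (Xsq a) (Xsq b) + wedge (Xsq a) (Xsq b) ∈ Qone 3 := by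
  have hgen := gen_mem (ET a b h) (Xmix a b) (Xsq b)
  rw [show ((ET a b h : Matrix (Fin 3) (Fin 3) ℤ)) = Matrix.transvection a b 1 from rfl,
    conjT_mix_same a b h, conjT_sq_same a b h] at hgen
  have e : wedge (Xmix a b + (Xsq a + Xsq a)) (Xsq b + Xsq a + Xmix a b)
        - wedge (Xmix a b) (Xsq b)
      = (wedge (Xsq a) (Xsq b) + wedge (Xsq a) (Xsq b)) + wedge (Xsq a) (Xmix a b) := by
    simp only [wedge_add_left, wedge_add_right, wedge_self]
    rw [wedge_anti (Xmix a b) (Xsq a)]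
    abel
  rw [e] at hgen
  have := AddSubgroup.sub_mem _ hgen (memL1 a b h)
  simpa using this

lemma memL4 (a b c : Fin 3) (hab : a ≠ b) (hac : a ≠ c) (hbc : b ≠ c) :
    wedge (Xmix a b) (Xmix b c) ∈ Qone 3 := by
  have hgen := gen_mem (ET b a hab.symm) (Xsq a) (Xmix b c)
  rw [show ((ET b a hab.symm : Matrix (Fin 3) (Fin 3) ℤ)) = Matrix.transvection b a 1 from rfl,
    conjT_sq_same b a hab.symm, conjT_mix_fix b a b c hab hac] at hgen
  have e : wedge (Xsq a + Xsq b + Xmix b a) (Xmix b c) - wedge (Xsq a) (Xmix b c)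
      = wedge (Xsq b) (Xmix b c) + wedge (Xmix a b) (Xmix b c) := by
    rw [wedge_add_left, wedge_add_left, Xmix_comm a b]
    abel
  rw [e] at hgen
  have := AddSubgroup.sub_mem _ hgen (memL1 b c hbc)
  simpa using this

lemma memL5 (a b c : Fin 3) (hab : a ≠ b) (hcb : c ≠ b) :
    wedge (Xsq a) (Xsq c) + wedge (Xsq a) (Xmix b c) ∈ Qone 3 := by
  have hgen := gen_mem (ET c b hcb) (Xsq a) (Xsq b)
  rw [show ((ET c b hcb : Matrix (Fin 3) (Fin 3) ℤ)) = Matrix.transvection c b 1 from rfl,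
    conjT_sq_ne c b a hab, conjT_sq_same c b hcb] at hgen
  have e : wedge (Xsq a) (Xsq b + Xsq c + Xmix c b) - wedge (Xsq a) (Xsq b)
      = wedge (Xsq a) (Xsq c) + wedge (Xsq a) (Xmix b c) := by
    rw [wedge_add_right, wedge_add_right, Xmix_comm b c]
    abel
  rwa [e] at hgen

lemma memL6 (i j k : Fin 3) (hij : i ≠ j) (hjk : j ≠ k) (hik : i ≠ k) :
    wedge (Xsq k) (Xmix i j) + wedge (Xsq i) (Xmix k j) ∈ Qone 3 := by
  have hki : k ≠ i := hik.symm
  have hkj : k ≠ j := hjk.symm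
  set σ : Matrix.SpecialLinearGroup (Fin 3) ℤ := ET k i hki * ET k j hkj with hσ
  have hcoe : (σ : Matrix (Fin 3) (Fin 3) ℤ)
      = Matrix.transvection k i 1 * Matrix.transvection k j 1 := rfl
  have hF : conjLin (Matrix.transvection k i 1 * Matrix.transvection k j (1:ℤ)) (Xsq i)
      = Xsq i + Xsq k + Xmix k i := by
    rw [conjLin_mul, LinearMap.comp_apply, conjT_sq_ne k j i hij, conjT_sq_same k i hki]
  have hG : conjLin (Matrix.transvection k i 1 * Matrix.transvection k j (1:ℤ)) (Xmix i j)
      = (Xmix i j + Xmix k j) + (Xmix k i + (Xsq k + Xsq k)) := by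
    rw [conjLin_mul, LinearMap.comp_apply, Xmix_comm i j,
      conjT_mix_move k j i hkj hki hij.symm, map_add, Xmix_comm j i,
      conjT_mix_move k i j hki hkj hij, conjT_mix_same k i hki]
  have hgen := gen_mem σ (Xsq i) (Xmix i j)
  rw [hcoe, hF, hG] at hgen
  -- the remainder terms
  have r1 : wedge (Xsq i) (Xmix k i) ∈ Qone 3 := by
    rw [Xmix_comm k i]; exact memL1 i k hik
  have r2 : wedge (Xsq i) (Xsq k) + wedge (Xsq i) (Xsq k) ∈ Qone 3 := memL3 i k hik
  have r3 : wedge (Xsq k) (Xmix k j) ∈ Qone 3 := memL1 k j hkj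
  have r4 : wedge (Xsq k) (Xmix k i) ∈ Qone 3 := memL1 k i hki
  have r5 : wedge (Xmix k i) (Xmix i j) ∈ Qone 3 := memL4 k i j hki hkj hij
  have r6 : wedge (Xmix k i) (Xmix k j) ∈ Qone 3 := by
    rw [Xmix_comm k i]; exact memL4 i k j hik hij hkj
  have r7 : wedge (Xmix k i) (Xsq k) ∈ Qone 3 := by
    rw [Xmix_comm k i]; exact memL2 i k hik
  have hR : (wedge (Xsq i) (Xmix k i) + (wedge (Xsq i) (Xsq k) + wedge (Xsq i) (Xsq k))
      + wedge (Xsq k) (Xmix k j) + wedge (Xsq k) (Xmix k i)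
      + wedge (Xmix k i) (Xmix i j) + wedge (Xmix k i) (Xmix k j)
      + (wedge (Xmix k i) (Xsq k) + wedge (Xmix k i) (Xsq k))) ∈ Qone 3 := by
    exact AddSubgroup.add_mem _ (AddSubgroup.add_mem _ (AddSubgroup.add_mem _
      (AddSubgroup.add_mem _ (AddSubgroup.add_mem _ (AddSubgroup.add_mem _ r1 r2) r3) r4) r5) r6)
      (AddSubgroup.add_mem _ r7 r7)
  have e : wedge (Xsq k) (Xmix i j) + wedge (Xsq i) (Xmix k j)
      = (wedge (Xsq i + Xsq k + Xmix k i)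
          ((Xmix i j + Xmix k j) + (Xmix k i + (Xsq k + Xsq k))) - wedge (Xsq i) (Xmix i j))
        - (wedge (Xsq i) (Xmix k i) + (wedge (Xsq i) (Xsq k) + wedge (Xsq i) (Xsq k))
      + wedge (Xsq k) (Xmix k j) + wedge (Xsq k) (Xmix k i)
      + wedge (Xmix k i) (Xmix i j) + wedge (Xmix k i) (Xmix k j)
      + (wedge (Xmix k i) (Xsq k) + wedge (Xmix k i) (Xsq k))) := by
    simp only [wedge_add_left, wedge_add_right, wedge_self]
    abel
  rw [e]
  exact AddSubgroup.sub_mem _ hgen hR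

end Aux

/-- For `g = 3` and distinct `i, j, k`, the listed elements of `Λ²(S²L)` lie in the
subgroup `Q₁` generated by `{σ·x - x : σ ∈ SL(3,ℤ), x ∈ Λ²(S²L)}`. -/
theorem stmt19 (i j k : Fin 3) (hij : i ≠ j) (hjk : j ≠ k) (hik : i ≠ k) :
    -- (i)
    wedge (Xsq i) (Xmix i j) ∈ Qone 3 ∧
    -- (ii)
    wedge (Xmix i j) (Xmix j k) ∈ Qone 3 ∧
    -- (iii)
    wedge (Xsq i) (Xsq k) + wedge (Xsq i) (Xmix j k) ∈ Qone 3 ∧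
    -- (iv)
    (2 : ℤ) • wedge (Xsq i) (Xsq j) + wedge (Xmix i j) (Xsq j) ∈ Qone 3 ∧
    -- (v)
    wedge (Xsq k) (Xmix i j) + wedge (Xsq i) (Xmix k j) ∈ Qone 3 := by
  refine ⟨memL1 i j hij, memL4 i j k hij hik hjk, memL5 i j k hij hjk.symm, ?_, memL6 i j k hij hjk hik⟩
  rw [two_smul]
  exact AddSubgroup.add_mem _ (memL3 i j hij) (memL2 i j hij)
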